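/- arXiv:math/0511439 — 2 statements merged into one kernel-verified Lean document; each statement's English description precedes it below -/
import Mathlib

section
/- For X > 0, the integral ∫_0^∞ (e^{-(u + X/u)}/u) du is at most C·X^{-1/4}·exp(-2√X) for some absolute constant C > 0. -/
/-!
Substituting `u = √X · eᵗ` turns `u + X / u` into `2√X cosh t` and `du / u` into `dt`, so the
integral equals `∫_ℝ exp (-2√X cosh t) dt`. Since `cosh t ≥ 1 + t² / 2`, the integrand is at most
`exp (-2√X) · exp (-√X t²)`, a Gaussian of total mass `exp (-2√X) √(π / √X)`; this gives the
bound with `C = √π`.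
-/

open Real MeasureTheory Set

theorem Real.one_add_sq_div_two_le_cosh (x : ℝ) : 1 + x ^ 2 / 2 ≤ cosh x := by
  have hy : 0 ≤ |x| / 2 := by positivity
  have h := cosh_two_mul (|x| / 2)
  rw [mul_div_cancel₀ _ two_ne_zero, cosh_abs, cosh_sq] at h
  nlinarith [sq_abs x, self_le_sinh_iff.2 hy]

theorem integral_Ioi_zero_eq_integral_mul_exp {E : Type*} [NormedAddCommGroup E]
    [NormedSpace ℝ E] (g : ℝ → E) {c : ℝ} (hc : 0 < c) :
    ∫ u in Ioi 0, g u = ∫ t, (c * exp t) • g (c * exp t) := by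
  have himage : (fun t => c * exp t) '' univ = Ioi 0 := by
    ext u
    simp only [image_univ, mem_range, mem_Ioi]
    refine ⟨fun ⟨t, ht⟩ => ht ▸ by positivity, fun hu => ⟨log (u / c), ?_⟩⟩
    rw [exp_log (div_pos hu hc), mul_div_cancel₀ _ hc.ne']
  have hderiv : ∀ t ∈ univ, HasDerivWithinAt (fun t => c * exp t) (c * exp t) univ t :=
    fun t _ => ((hasDerivAt_exp t).const_mul c).hasDerivWithinAt
  have hinj : InjOn (fun t => c * exp t) univ :=
    fun _ _ _ _ h => exp_injective (mul_left_cancel₀ hc.ne' h)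
  rw [← himage, integral_image_eq_integral_abs_deriv_smul MeasurableSet.univ hderiv hinj,
    setIntegral_univ]
  simp_rw [abs_of_pos (mul_pos hc (exp_pos _))]

theorem integral_exp_neg_add_div_div_eq_integral_exp_neg_mul_cosh {X : ℝ} (hX : 0 < X) :
    ∫ u in Ioi 0, exp (-(u + X / u)) / u = ∫ t, exp (-(2 * √X * cosh t)) := by
  have hs : 0 < √X := sqrt_pos.2 hX
  rw [integral_Ioi_zero_eq_integral_mul_exp _ hs]
  congr 1 with t
  rw [smul_eq_mul, mul_div_cancel₀ _ (by positivity), cosh_eq]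
  congr 1
  rw [exp_neg t]
  field_simp
  linear_combination sq_sqrt hX.le

theorem integral_exp_neg_mul_cosh_le {a : ℝ} (ha : 0 < a) :
    ∫ t, exp (-(a * cosh t)) ≤ exp (-a) * √(2 * π / a) := by
  have hgauss : ∫ t, exp (-a) * exp (-(a / 2) * t ^ 2) = exp (-a) * √(2 * π / a) := by
    rw [integral_const_mul, integral_gaussian]
    congr 2
    field_simp
  rw [← hgauss]
  refine integral_mono_of_nonneg (ae_of_all _ fun t => (exp_pos _).le)
    ((integrable_exp_neg_mul_sq (by positivity)).const_mul _) (ae_of_all _ fun t => ?_)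
  dsimp only
  rw [← exp_add, exp_le_exp]
  nlinarith [one_add_sq_div_two_le_cosh t]

/-- For `X > 0`, `∫_0^∞ e^{-(u + X/u)}/u du ≤ C·X^{-1/4}·exp(-2√X)` for some
absolute constant `C > 0`. -/
theorem stmt_5 :
    ∃ C : ℝ, 0 < C ∧ ∀ X : ℝ, 0 < X →
      (∫ u in Set.Ioi (0 : ℝ), Real.exp (-(u + X / u)) / u)
        ≤ C * X ^ (-(1 / 4) : ℝ) * Real.exp (-2 * Real.sqrt X) := by
  refine ⟨√π, sqrt_pos.2 pi_pos, fun X hX => ?_⟩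
  have hquarter : √(√X) = X ^ (1 / 4 : ℝ) := by
    rw [sqrt_eq_rpow, sqrt_eq_rpow, ← rpow_mul hX.le]
    norm_num
  have hmass : √(2 * π / (2 * √X)) = √π * X ^ (-(1 / 4) : ℝ) := by
    rw [mul_div_mul_left _ _ two_ne_zero, sqrt_div' _ (sqrt_nonneg _), hquarter,
      div_eq_mul_inv, ← rpow_neg hX.le]
  rw [integral_exp_neg_add_div_div_eq_integral_exp_neg_mul_cosh hX]
  calc ∫ t, exp (-(2 * √X * cosh t))
      ≤ exp (-(2 * √X)) * √(2 * π / (2 * √X)) :=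
        integral_exp_neg_mul_cosh_le (by positivity)
    _ = √π * X ^ (-(1 / 4) : ℝ) * exp (-2 * √X) := by rw [hmass, neg_mul]; ring
end

section
/- Suppose g : ℝ_{>0} → ℝ satisfies 0 ≤ g(X) ≤ C·X^{-1/4}e^{-2√X} for all X > 0. Then for any W ≥ 1, ∑_{m=1}^∞ m^{-1} ∑_{n=1}^∞ √n · g(4π²nm²/W) converges, and is O(W^{3/2}). -/
/-! With `b = 2π/√W` the argument of `g` is `X = (b m √n)²`, and since `X^{1/4} ≤ e^{√X}` the
`(m, n)` term is at most `C/(b m²) · e^{-b√n}`. The double sum is therefore dominated by the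
product of `∑ 1/m² = π²/6` and `∑ e^{-b√n}`, which the integral test bounds by
`∫₀^∞ e^{-b√x} dx = 2/b²`; in total `π²C/(3b³) = C W^{3/2}/(24π)`. -/

open Real Set MeasureTheory

theorem hasSum_one_div_succ_sq : HasSum (fun m : ℕ => 1 / ((m : ℝ) + 1) ^ 2) (π ^ 2 / 6) := by
  simpa using (hasSum_nat_add_iff' 1).mpr hasSum_zeta_two

theorem antitoneOn_exp_neg_mul_sqrt {b : ℝ} (hb : 0 ≤ b) :
    AntitoneOn (fun x : ℝ => exp (-b * x ^ (1 / 2 : ℝ))) (Ici 0) := by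
  intro x hx y _ hxy
  simp only [exp_le_exp, neg_mul, neg_le_neg_iff]
  exact mul_le_mul_of_nonneg_left (rpow_le_rpow hx hxy (by norm_num)) hb

theorem integral_exp_neg_mul_sqrt {b : ℝ} (hb : 0 < b) :
    ∫ x in Ioi (0 : ℝ), exp (-b * x ^ (1 / 2 : ℝ)) = 2 / b ^ 2 := by
  rw [integral_exp_neg_mul_rpow (by norm_num) hb]
  norm_num [Gamma_ofNat_eq_factorial, rpow_neg hb.le]
  ring

theorem summable_exp_neg_mul_sqrt_succ {b : ℝ} (hb : 0 < b) :
    Summable (fun n : ℕ => exp (-(b * √((n : ℝ) + 1)))) ∧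
      ∑' n : ℕ, exp (-(b * √((n : ℝ) + 1))) ≤ 2 / b ^ 2 := by
  have anti := antitoneOn_exp_neg_mul_sqrt hb.le
  have int : IntegrableOn (fun x : ℝ => exp (-b * x ^ (1 / 2 : ℝ))) (Ioi 0) := by
    simpa using integrableOn_rpow_mul_exp_neg_mul_rpow (s := 0) (by norm_num) (by norm_num) hb
  have nonneg : ∀ t ∈ Ioi (0 : ℝ), 0 ≤ exp (-b * t ^ (1 / 2 : ℝ)) := fun _ _ => (exp_pos _).le
  have hf : ∀ n : ℕ, exp (-(b * √((n : ℝ) + 1))) = exp (-b * ((n + 1 : ℕ) : ℝ) ^ (1 / 2 : ℝ)) := by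
    intro n; rw [sqrt_eq_rpow]; push_cast; ring_nf
  simp only [hf]
  refine ⟨(summable_nat_add_iff 1).mpr (anti.summable_of_integrableOn_Ioi_zero int nonneg), ?_⟩
  exact (anti.tsum_add_one_le_integral int nonneg).trans (integral_exp_neg_mul_sqrt hb).le

theorem sqrt_le_exp (x : ℝ) : √x ≤ exp x := by
  rw [sqrt_le_iff]
  exact ⟨(exp_pos x).le, by nlinarith [add_one_le_exp x, exp_pos x]⟩

theorem rpow_neg_quarter_mul_exp_le {X : ℝ} (hX : 0 < X) :
    X ^ (-(1 / 4) : ℝ) * exp (-2 * √X) ≤ exp (-√X) / √X := by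
  have hs : 0 < √X := sqrt_pos.mpr hX
  have hquarter : X ^ (-(1 / 4) : ℝ) * √X = √(√X) := by
    rw [sqrt_eq_rpow, sqrt_eq_rpow, ← rpow_mul hX.le, ← rpow_add hX]; norm_num
  rw [le_div_iff₀ hs, mul_right_comm, hquarter]
  calc √(√X) * exp (-2 * √X) ≤ exp (√X) * exp (-2 * √X) := by
        gcongr; exact sqrt_le_exp _
    _ = exp (-√X) := by rw [← exp_add]; ring_nf

theorem summable_and_tsum_le_mul_tsum_of_le_mul {ι κ : Type*} {f : ι × κ → ℝ} {u : ι → ℝ}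
    {v : κ → ℝ} (hf : ∀ q, 0 ≤ f q) (hfuv : ∀ q, f q ≤ u q.1 * v q.2) (hu : Summable u)
    (hv : Summable v) (hu0 : ∀ i, 0 ≤ u i) (hv0 : ∀ j, 0 ≤ v j) :
    Summable f ∧ ∑' q, f q ≤ (∑' i, u i) * ∑' j, v j := by
  have huv := hu.mul_of_nonneg hv hu0 hv0
  have hsf := Summable.of_nonneg_of_le hf hfuv huv
  exact ⟨hsf, (hsf.tsum_le_tsum hfuv huv).trans_eq (hu.tsum_mul_tsum hv huv).symm⟩

theorem inv_mul_sqrt_mul_le_of_le_decay {g : ℝ → ℝ} {C b M N : ℝ} (hC : 0 ≤ C)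
    (hg : ∀ X : ℝ, 0 < X → g X ≤ C * X ^ (-(1 / 4) : ℝ) * exp (-2 * √X))
    (hb : 0 < b) (hM : 1 ≤ M) (hN : 0 < N) :
    M⁻¹ * (√N * g ((b * M * √N) ^ 2)) ≤ C / b * (1 / M ^ 2) * exp (-(b * √N)) := by
  have hsN : 0 < √N := sqrt_pos.mpr hN
  set s := b * M * √N with hs_def
  have hs : 0 < s := by positivity
  have hgs : g (s ^ 2) ≤ C * (exp (-s) / s) := by
    have h := rpow_neg_quarter_mul_exp_le (pow_pos hs 2)
    rw [sqrt_sq hs.le] at h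
    calc g (s ^ 2) ≤ C * (s ^ 2) ^ (-(1 / 4) : ℝ) * exp (-2 * √(s ^ 2)) := hg _ (by positivity)
      _ ≤ C * (exp (-s) / s) := by rw [sqrt_sq hs.le, mul_assoc]; gcongr
  have hsb : b * √N ≤ s := by rw [hs_def]; nlinarith [mul_pos hb hsN]
  calc M⁻¹ * (√N * g (s ^ 2)) ≤ M⁻¹ * (√N * (C * (exp (-s) / s))) := by gcongr
    _ = C / b * (1 / M ^ 2) * exp (-s) := by rw [hs_def]; field_simp
    _ ≤ C / b * (1 / M ^ 2) * exp (-(b * √N)) := by gcongr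

open Real in
/-- If `0 ≤ g(X) ≤ C X^{-1/4} e^{-2√X}` for all `X > 0`, then for `W ≥ 1` the
double sum `∑_{m ≥ 1} m⁻¹ ∑_{n ≥ 1} √n · g(4π²nm²/W)` converges and is
`O(W^{3/2})`. -/
theorem stmt_18 (g : ℝ → ℝ) (C : ℝ) (hC : 0 < C)
    (hg : ∀ X : ℝ, 0 < X →
      0 ≤ g X ∧ g X ≤ C * X ^ (-(1 / 4) : ℝ) * Real.exp (-2 * Real.sqrt X)) :
    ∃ C' : ℝ, 0 < C' ∧ ∀ W : ℝ, 1 ≤ W →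
      Summable (fun q : ℕ × ℕ =>
        ((q.1 + 1 : ℝ))⁻¹ * (Real.sqrt (q.2 + 1) *
          g (4 * π ^ 2 * (q.2 + 1) * (q.1 + 1) ^ 2 / W))) ∧
      (∑' q : ℕ × ℕ,
        ((q.1 + 1 : ℝ))⁻¹ * (Real.sqrt (q.2 + 1) *
          g (4 * π ^ 2 * (q.2 + 1) * (q.1 + 1) ^ 2 / W)))
        ≤ C' * W ^ ((3 : ℝ) / 2) := by
  refine ⟨C / (24 * π), by positivity, fun W hW => ?_⟩
  have hW : 0 < W := by linarith
  set b := 2 * π / √W with hb_def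
  have hb : 0 < b := by positivity
  have hX : ∀ M N : ℝ, 0 ≤ N → 4 * π ^ 2 * N * M ^ 2 / W = (b * M * √N) ^ 2 := by
    intro M N hN
    rw [mul_pow, mul_pow, div_pow, sq_sqrt hN, sq_sqrt hW.le]; ring
  obtain ⟨hsummable, hle⟩ := summable_and_tsum_le_mul_tsum_of_le_mul
    (f := fun q : ℕ × ℕ => ((q.1 + 1 : ℝ))⁻¹ * (√(q.2 + 1) *
      g (4 * π ^ 2 * (q.2 + 1) * (q.1 + 1) ^ 2 / W)))
    (u := fun m : ℕ => C / b * (1 / ((m : ℝ) + 1) ^ 2))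
    (v := fun n : ℕ => exp (-(b * √((n : ℝ) + 1))))
    (fun q => by
      have := (hg _ (by positivity : 0 < 4 * π ^ 2 * ((q.2 : ℝ) + 1) * ((q.1 : ℝ) + 1) ^ 2 / W)).1
      positivity)
    (fun q => by
      rw [hX _ _ (by positivity)]
      exact inv_mul_sqrt_mul_le_of_le_decay hC.le (fun X hX => (hg X hX).2) hb
        (by simp) (by positivity))
    (hasSum_one_div_succ_sq.summable.mul_left _) (summable_exp_neg_mul_sqrt_succ hb).1
    (fun _ => by positivity) (fun _ => (exp_pos _).le)
  refine ⟨hsummable, hle.trans ?_⟩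
  rw [tsum_mul_left, hasSum_one_div_succ_sq.tsum_eq]
  have hW32 : W ^ ((3 : ℝ) / 2) = W * √W := by
    rw [show (3 : ℝ) / 2 = 1 + 1 / 2 by norm_num, rpow_add hW, rpow_one, sqrt_eq_rpow]
  calc C / b * (π ^ 2 / 6) * ∑' n : ℕ, exp (-(b * √((n : ℝ) + 1)))
      ≤ C / b * (π ^ 2 / 6) * (2 / b ^ 2) := by gcongr; exact (summable_exp_neg_mul_sqrt_succ hb).2
    _ = C / (24 * π) * W ^ ((3 : ℝ) / 2) := by
      have hsW : √W ^ 2 = W := sq_sqrt hW.le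
      rw [hW32, hb_def]; field_simp; rw [hsW]; ring
end
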